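/- Let L be a Lie algebra over a field F, let T be a Lie inverse semialgebra over F, and let ρ : L → T be a premorphism. Let A be a finite-dimensional subspace of L and β = {x₁, …, x_k} a finite spanning set of A. Then s := 0_{ρ(x₁)} + ⋯ + 0_{ρ(x_k)} is the infimum, with respect to the natural partial order ⪯ of T, of the set {0_{ρ(a)} : a ∈ A}: s ⪯ 0_{ρ(a)} for every a ∈ A, and every t ∈ T with t ⪯ 0_{ρ(a)} for all a ∈ A satisfies t ⪯ s. In particular, s does not depend on the choice of the finite spanning set β of A. -/
import Mathlib


/-- An inverse semivector space over a field `F`. -/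
structure InvSemivectorSpace (F : Type*) [Field F] (V : Type*) where
  add : V → V → V
  neg : V → V
  smul : F → V → V
  add_comm' : ∀ x y : V, add x y = add y x
  add_assoc' : ∀ x y z : V, add (add x y) z = add x (add y z)
  add_neg_add : ∀ x : V, add (add x (neg x)) x = x
  neg_add_neg : ∀ x : V, add (add (neg x) x) (neg x) = neg x
  add_smul' : ∀ (α β : F) (x : V), smul (α + β) x = add (smul α x) (smul β x)
  smul_add' : ∀ (α : F) (x y : V), smul α (add x y) = add (smul α x) (smul α y)
  smul_smul' : ∀ (α β : F) (x : V), smul α (smul β x) = smul (α * β) x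
  one_smul' : ∀ x : V, smul 1 x = x

namespace InvSemivectorSpace

variable {F : Type*} [Field F] {V : Type*} (S : InvSemivectorSpace F V)

/-- `0_x := x + neg x`. -/
def z0 (x : V) : V := S.add x (S.neg x)

/-- The natural partial order: `x ⪯ y` iff `x = y + 0_x`. -/
def le (x y : V) : Prop := x = S.add y (S.z0 x)

/-- Additive idempotents. -/
def IsIdem (e : V) : Prop := S.add e e = e

section Lemmas

instance : Std.Associative S.add := ⟨S.add_assoc'⟩
instance : Std.Commutative S.add := ⟨S.add_comm'⟩

lemma inv_unique {x a b : V}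
    (ha1 : S.add (S.add x a) x = x) (ha2 : S.add (S.add a x) a = a)
    (hb1 : S.add (S.add x b) x = x) (hb2 : S.add (S.add b x) b = b) :
    a = b := by
  have keyA : a = S.add a (S.add x b) := by
    calc a = S.add (S.add a x) a := ha2.symm
      _ = S.add (S.add a (S.add (S.add x b) x)) a := by rw [hb1]
      _ = S.add (S.add (S.add a x) a) (S.add x b) := by ac_rfl
      _ = S.add a (S.add x b) := by rw [ha2]
  have keyB : b = S.add b (S.add x a) := by
    calc b = S.add (S.add b x) b := hb2.symm
      _ = S.add (S.add b (S.add (S.add x a) x)) b := by rw [ha1]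
      _ = S.add (S.add (S.add b x) b) (S.add x a) := by ac_rfl
      _ = S.add b (S.add x a) := by rw [hb2]
  calc a = S.add a (S.add x b) := keyA
    _ = S.add b (S.add x a) := by ac_rfl
    _ = b := keyB.symm

lemma smul_neg_one (x : V) : S.smul (-1) x = S.neg x := by
  refine S.inv_unique (x := x) ?_ ?_ ?_ ?_
  · calc S.add (S.add x (S.smul (-1) x)) x
        = S.add (S.add (S.smul 1 x) (S.smul (-1) x)) (S.smul 1 x) := by rw [S.one_smul']
      _ = S.smul (1 + -1 + 1) x := by rw [← S.add_smul', ← S.add_smul']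
      _ = S.smul 1 x := by norm_num
      _ = x := S.one_smul' x
  · calc S.add (S.add (S.smul (-1) x) x) (S.smul (-1) x)
        = S.add (S.add (S.smul (-1) x) (S.smul 1 x)) (S.smul (-1) x) := by rw [S.one_smul']
      _ = S.smul (-1 + 1 + -1) x := by rw [← S.add_smul', ← S.add_smul']
      _ = S.smul (-1) x := by norm_num
  · exact S.add_neg_add x
  · exact S.neg_add_neg x

lemma z0_eq (x : V) : S.z0 x = S.smul 0 x := by
  calc S.z0 x = S.add (S.smul 1 x) (S.smul (-1) x) := by
        rw [S.one_smul', S.smul_neg_one]; rfl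
    _ = S.smul (1 + -1) x := (S.add_smul' _ _ _).symm
    _ = S.smul 0 x := by norm_num

lemma z0_add (x y : V) : S.z0 (S.add x y) = S.add (S.z0 x) (S.z0 y) := by
  rw [z0_eq, z0_eq, z0_eq, S.smul_add']

lemma z0_smul (α : F) (x : V) : S.z0 (S.smul α x) = S.z0 x := by
  rw [z0_eq, z0_eq, S.smul_smul', zero_mul]

lemma z0_z0 (x : V) : S.z0 (S.z0 x) = S.z0 x := by
  rw [S.z0_eq x, S.z0_smul, S.z0_eq]

lemma add_z0 (x : V) : S.add x (S.z0 x) = x := by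
  show S.add x (S.add x (S.neg x)) = x
  calc S.add x (S.add x (S.neg x)) = S.add (S.add x (S.neg x)) x := by ac_rfl
    _ = x := S.add_neg_add x

lemma z0_idem (x : V) : S.add (S.z0 x) (S.z0 x) = S.z0 x := by
  have h := S.add_z0 (S.z0 x)
  rwa [S.z0_z0] at h

lemma le_antisymm' {u v : V} (h1 : S.le u v) (h2 : S.le v u) : u = v := by
  unfold le at h1 h2
  have hu : S.z0 u = S.add (S.z0 v) (S.z0 u) := by
    conv_lhs => rw [h1]
    rw [S.z0_add, S.z0_z0]
  have hv : S.z0 v = S.add (S.z0 u) (S.z0 v) := by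
    conv_lhs => rw [h2]
    rw [S.z0_add, S.z0_z0]
  have hz : S.z0 u = S.z0 v := by
    calc S.z0 u = S.add (S.z0 v) (S.z0 u) := hu
      _ = S.add (S.z0 u) (S.z0 v) := by ac_rfl
      _ = S.z0 v := hv.symm
  rw [h1, hz, S.add_z0]


end Lemmas

end InvSemivectorSpace


/-- A Lie inverse semialgebra over `F`. -/
structure LieInvSemialgebra (F : Type*) [Field F] (V : Type*) extends
    InvSemivectorSpace F V where
  br : V → V → V
  smul_br : ∀ (α : F), α ≠ 0 → ∀ x y : V, smul α (br x y) = br (smul α x) y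
  br_smul : ∀ (α : F), α ≠ 0 → ∀ x y : V, smul α (br x y) = br x (smul α y)
  br_add_le : ∀ x y z : V,
    toInvSemivectorSpace.le (add (br x y) (br x z)) (br x (add y z))
  br_skew : ∀ x y : V, br x y = neg (br y x)
  br_idem_add : ∀ x z e : V, toInvSemivectorSpace.IsIdem e →
    br x (add e z) = add (br x e) (br x z)
  jacobi_le : ∀ x y z : V,
    toInvSemivectorSpace.le
      (add (add (br (br x y) z) (br (br y z) x)) (br (br z x) y))
      (toInvSemivectorSpace.z0 (add (add x y) z))
  br_idem : ∀ e f : V, toInvSemivectorSpace.IsIdem e → toInvSemivectorSpace.IsIdem f →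
    br e f = add e f

/-- Iterated sum `f 0 + f 1 + ⋯ + f n` with respect to a binary operation. -/
def finSum {V : Type*} (add : V → V → V) : {n : ℕ} → (Fin (n + 1) → V) → V
  | 0, f => f 0
  | _ + 1, f => add (finSum add fun i => f i.castSucc) (f (Fin.last _))

namespace InvSemivectorSpace
variable {F : Type*} [Field F] {V : Type*} (S : InvSemivectorSpace F V)

lemma finSum_z0 {n : ℕ} (f : Fin (n + 1) → V) (hf : ∀ i, S.z0 (f i) = f i) :
    S.z0 (finSum S.add f) = finSum S.add f := by
  induction n with
  | zero => exact hf 0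
  | succ n ih =>
    show S.z0 (S.add (finSum S.add fun i => f i.castSucc) (f (Fin.last _)))
      = S.add (finSum S.add fun i => f i.castSucc) (f (Fin.last _))
    rw [S.z0_add, ih _ (fun i => hf i.castSucc), hf]

lemma finSum_absorb {n : ℕ} (f : Fin (n + 1) → V) (hf : ∀ i, S.z0 (f i) = f i)
    (j : Fin (n + 1)) : S.add (finSum S.add f) (f j) = finSum S.add f := by
  induction n with
  | zero =>
    have hj : j = 0 := by omega
    subst hj
    have h := S.add_z0 (f 0)
    rwa [hf 0] at h
  | succ n ih =>
    show S.add (S.add (finSum S.add fun i => f i.castSucc) (f (Fin.last _))) (f j)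
      = S.add (finSum S.add fun i => f i.castSucc) (f (Fin.last _))
    induction j using Fin.lastCases with
    | last =>
      have h : S.add (f (Fin.last (n + 1))) (f (Fin.last (n + 1))) = f (Fin.last (n + 1)) := by
        have h := S.add_z0 (f (Fin.last (n + 1))); rwa [hf] at h
      calc S.add (S.add (finSum S.add fun i => f i.castSucc) (f (Fin.last _))) (f (Fin.last _))
          = S.add (finSum S.add fun i => f i.castSucc)
            (S.add (f (Fin.last _)) (f (Fin.last _))) := by ac_rfl
        _ = _ := by rw [h]
    | cast i =>
      calc S.add (S.add (finSum S.add fun i => f i.castSucc) (f (Fin.last _))) (f i.castSucc)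
          = S.add (S.add (finSum S.add fun i => f i.castSucc) (f i.castSucc))
              (f (Fin.last _)) := by ac_rfl
        _ = _ := by rw [ih (fun i => f i.castSucc) (fun i => hf i.castSucc) i]

lemma le_finSum {n : ℕ} (f : Fin (n + 1) → V) (hf : ∀ i, S.z0 (f i) = f i)
    (t : V) (ht : ∀ i, S.le t (f i)) : S.le t (finSum S.add f) := by
  induction n with
  | zero => exact ht 0
  | succ n ih =>
    have h1 : t = S.add (finSum S.add fun i => f i.castSucc) (S.z0 t) :=
      ih (fun i => f i.castSucc) (fun i => hf i.castSucc) (fun i => ht i.castSucc)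
    have hz : S.z0 t = S.add (f (Fin.last _)) (S.z0 t) := by
      conv_lhs => rw [ht (Fin.last _)]
      rw [S.z0_add, hf, S.z0_z0]
    show t = S.add (S.add (finSum S.add fun i => f i.castSucc) (f (Fin.last _))) (S.z0 t)
    calc t = S.add (finSum S.add fun i => f i.castSucc) (S.z0 t) := h1
      _ = S.add (finSum S.add fun i => f i.castSucc)
            (S.add (f (Fin.last _)) (S.z0 t)) := by rw [← hz]
      _ = S.add (S.add (finSum S.add fun i => f i.castSucc) (f (Fin.last _))) (S.z0 t) := by
            ac_rfl

end InvSemivectorSpace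

namespace InvSemivectorSpace

lemma premorphism_habs {F : Type*} [Field F] {L : Type*} [AddCommGroup L] [Module F L]
    {T : Type*} (S : InvSemivectorSpace F T) (ρ : L → T)
    (hadd : ∀ x y : L, S.le (S.add (ρ x) (ρ y)) (ρ (x + y))) (a b : L) :
    S.add (S.z0 (ρ (a + b))) (S.add (S.z0 (ρ a)) (S.z0 (ρ b)))
      = S.add (S.z0 (ρ a)) (S.z0 (ρ b)) := by
  have h : S.add (ρ a) (ρ b) = S.add (ρ (a + b)) (S.z0 (S.add (ρ a) (ρ b))) := hadd a b
  have h2 := congrArg S.z0 h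
  rw [S.z0_add, S.z0_add, S.z0_add, S.z0_z0, S.z0_z0] at h2
  exact h2.symm

lemma partA {F : Type*} [Field F] {L : Type*} [AddCommGroup L] [Module F L]
    {T : Type*} (S : InvSemivectorSpace F T) (ρ : L → T)
    (hadd : ∀ x y : L, S.le (S.add (ρ x) (ρ y)) (ρ (x + y)))
    (hsmul : ∀ (α : F), α ≠ 0 → ∀ x : L, ρ (α • x) = S.smul α (ρ x))
    {k : ℕ} (x : Fin (k + 1) → L) :
    ∀ a ∈ Submodule.span F (Set.range x),
      S.le (finSum S.add fun i => S.z0 (ρ (x i))) (S.z0 (ρ a)) := by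
  set s := finSum S.add fun i => S.z0 (ρ (x i)) with hsdef
  have hs : S.z0 s = s := S.finSum_z0 _ (fun i => S.z0_z0 _)
  have habsorb : ∀ j, S.add s (S.z0 (ρ (x j))) = s :=
    fun j => S.finSum_absorb _ (fun i => S.z0_z0 _) j
  have hzero : S.add s (S.z0 (ρ 0)) = s := by
    have h0 := S.premorphism_habs ρ hadd (x 0) ((-1 : F) • x 0)
    rw [hsmul (-1) (by norm_num), S.z0_smul] at h0
    rw [show x 0 + (-1 : F) • x 0 = 0 by rw [neg_one_smul]; exact add_neg_cancel _] at h0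
    rw [S.z0_idem] at h0
    calc S.add s (S.z0 (ρ 0)) = S.add (S.add s (S.z0 (ρ (x 0)))) (S.z0 (ρ 0)) := by
          rw [habsorb 0]
      _ = S.add s (S.add (S.z0 (ρ 0)) (S.z0 (ρ (x 0)))) := by ac_rfl
      _ = S.add s (S.z0 (ρ (x 0))) := by rw [h0]
      _ = s := habsorb 0
  have key : ∀ a ∈ Submodule.span F (Set.range x), S.add s (S.z0 (ρ a)) = s := by
    intro a ha
    induction ha using Submodule.span_induction with
    | mem a ha => obtain ⟨i, rfl⟩ := ha; exact habsorb i
    | zero => exact hzero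
    | add a b _ _ ha hb =>
      have h0 := S.premorphism_habs ρ hadd a b
      calc S.add s (S.z0 (ρ (a + b)))
          = S.add (S.add (S.add s (S.z0 (ρ a))) (S.z0 (ρ b))) (S.z0 (ρ (a + b))) := by
            rw [ha, hb]
        _ = S.add s (S.add (S.z0 (ρ (a + b))) (S.add (S.z0 (ρ a)) (S.z0 (ρ b)))) := by ac_rfl
        _ = S.add s (S.add (S.z0 (ρ a)) (S.z0 (ρ b))) := by rw [h0]
        _ = S.add (S.add s (S.z0 (ρ a))) (S.z0 (ρ b)) := by ac_rfl
        _ = s := by rw [ha, hb]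
    | smul α a _ ha =>
      by_cases hα : α = 0
      · subst hα; rw [zero_smul]; exact hzero
      · rw [hsmul α hα, S.z0_smul]; exact ha
  intro a ha
  show s = S.add (S.z0 (ρ a)) (S.z0 s)
  rw [hs, S.add_comm']
  exact (key a ha).symm

lemma partB {F : Type*} [Field F] {L : Type*} [AddCommGroup L] [Module F L]
    {T : Type*} (S : InvSemivectorSpace F T) (ρ : L → T)
    {k : ℕ} (x : Fin (k + 1) → L) (t : T)
    (ht : ∀ a ∈ Submodule.span F (Set.range x), S.le t (S.z0 (ρ a))) :
    S.le t (finSum S.add fun i => S.z0 (ρ (x i))) :=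
  S.le_finSum _ (fun i => S.z0_z0 _) t
    (fun i => ht (x i) (Submodule.subset_span ⟨i, rfl⟩))

end InvSemivectorSpace

/-- Lemma on the infimum of `{0_{ρ(a)} : a ∈ A}` for a premorphism `ρ` from a Lie
algebra `L` to a Lie inverse semialgebra `T` and a finite-dimensional subspace `A`
of `L` with finite spanning set `x₁, …, x_k`. -/
theorem stmt_14 {F : Type*} [Field F] {L : Type*} [LieRing L] [LieAlgebra F L]
    {T : Type*} (S : LieInvSemialgebra F T) (ρ : L → T)
    (hadd : ∀ x y : L, S.le (S.add (ρ x) (ρ y)) (ρ (x + y)))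
    (hbr : ∀ x y : L, S.le (S.br (ρ x) (ρ y)) (ρ ⁅x, y⁆))
    (hsmul : ∀ (α : F), α ≠ 0 → ∀ x : L, ρ (α • x) = S.smul α (ρ x))
    (A : Submodule F L) (k : ℕ) (x : Fin (k + 1) → L)
    (hx : Submodule.span F (Set.range x) = A) :
    -- `s` is a lower bound of `{0_{ρ(a)} : a ∈ A}`
    (∀ a ∈ A, S.le (finSum S.add fun i => S.z0 (ρ (x i))) (S.z0 (ρ a))) ∧
    -- and it is the greatest lower bound
    (∀ t : T, (∀ a ∈ A, S.le t (S.z0 (ρ a))) →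
      S.le t (finSum S.add fun i => S.z0 (ρ (x i)))) ∧
    -- in particular, it does not depend on the choice of the spanning set
    (∀ (m : ℕ) (y : Fin (m + 1) → L), Submodule.span F (Set.range y) = A →
      finSum S.add (fun i => S.z0 (ρ (y i))) =
        finSum S.add fun i => S.z0 (ρ (x i))) := by
  subst hx
  refine ⟨?_, ?_, ?_⟩
  · exact S.toInvSemivectorSpace.partA ρ hadd hsmul x
  · exact fun t ht => S.toInvSemivectorSpace.partB ρ x t ht
  · intro m y hy
    refine S.toInvSemivectorSpace.le_antisymm' ?_ ?_
    · exact S.toInvSemivectorSpace.partB ρ x _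
        (fun a ha => S.toInvSemivectorSpace.partA ρ hadd hsmul y a (by rw [hy]; exact ha))
    · exact S.toInvSemivectorSpace.partB ρ y _
        (fun a ha => S.toInvSemivectorSpace.partA ρ hadd hsmul x a (by rw [← hy]; exact ha))
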